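/- Given a Nelsonian model M = (W, ≤, V⁺, V⁻), define the intuitionistic model Mⁱ = (W, ≤, V) over the extended variable set by V(p_i) = V⁺(p_i) and V(q_i) = V⁻(p_i). Then for every world w and every N4-formula φ: M, w ⊨⁺ φ if and only if Mⁱ, w ⊨_IL E(φ). -/

import Mathlib

inductive N4Form : Type where
  | var : Nat → N4Form
  | and : N4Form → N4Form → N4Form
  | or  : N4Form → N4Form → N4Form
  | neg : N4Form → N4Form
  | imp : N4Form → N4Form → N4Form

/-- A Nelsonian model: a preorder with two monotone (upward-closed) valuations. -/
structure NModel where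
  W : Type
  le : W → W → Prop
  refl : ∀ w, le w w
  trans : ∀ {a b c}, le a b → le b c → le a c
  Vp : Nat → W → Prop
  Vn : Nat → W → Prop
  monoP : ∀ (n : Nat) {w v}, le w v → Vp n w → Vp n v
  monoN : ∀ (n : Nat) {w v}, le w v → Vn n w → Vn n v

/-- Verification (`true`) and falsification (`false`) in a Nelsonian model. -/
def NModel.sat (M : NModel) : N4Form → Bool → M.W → Prop
  | .var n, true, w => M.Vp n w
  | .var n, false, w => M.Vn n w
  | .and φ ψ, true, w => M.sat φ true w ∧ M.sat ψ true w
  | .and φ ψ, false, w => M.sat φ false w ∨ M.sat ψ false w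
  | .or φ ψ, true, w => M.sat φ true w ∨ M.sat ψ true w
  | .or φ ψ, false, w => M.sat φ false w ∧ M.sat ψ false w
  | .neg φ, b, w => M.sat φ (!b) w
  | .imp φ ψ, true, w => ∀ v, M.le w v → M.sat φ true v → M.sat ψ true v
  | .imp φ ψ, false, w => M.sat φ true w ∧ M.sat ψ false w

/-- N4-validity: verified at every world of every Nelsonian model. -/
def N4Valid (φ : N4Form) : Prop := ∀ (M : NModel) (w : M.W), M.sat φ true w

/-- Positive (negation-free) formulas over the extended variable set
`Sum.inl i` for `p i` and `Sum.inr i` for `q i`. -/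
inductive PosForm : Type where
  | var : Nat ⊕ Nat → PosForm
  | and : PosForm → PosForm → PosForm
  | or  : PosForm → PosForm → PosForm
  | imp : PosForm → PosForm → PosForm

/-- An extended intuitionistic Kripke model. -/
structure IModel where
  W : Type
  le : W → W → Prop
  refl : ∀ w, le w w
  trans : ∀ {a b c}, le a b → le b c → le a c
  V : Nat ⊕ Nat → W → Prop
  mono : ∀ (a : Nat ⊕ Nat) {w v}, le w v → V a w → V a v

def IModel.sat (M : IModel) : PosForm → M.W → Prop
  | .var a, w => M.V a w
  | .and φ ψ, w => M.sat φ w ∧ M.sat ψ w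
  | .or φ ψ, w => M.sat φ w ∨ M.sat ψ w
  | .imp φ ψ, w => ∀ v, M.le w v → M.sat φ v → M.sat ψ v

/-- The embedding `E`; `E φ true = E(φ)` and `E φ false = E(~φ)`. -/
def E : N4Form → Bool → PosForm
  | .var n, true => .var (.inl n)
  | .var n, false => .var (.inr n)
  | .and φ ψ, true => .and (E φ true) (E ψ true)
  | .and φ ψ, false => .or (E φ false) (E ψ false)
  | .or φ ψ, true => .or (E φ true) (E ψ true)
  | .or φ ψ, false => .and (E φ false) (E ψ false)
  | .neg φ, b => E φ (!b)
  | .imp φ ψ, true => .imp (E φ true) (E ψ true)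
  | .imp φ ψ, false => .and (E φ true) (E ψ false)

/-- The intuitionistic companion of a Nelsonian model. -/
def NModel.toIModel (M : NModel) : IModel where
  W := M.W
  le := M.le
  refl := M.refl
  trans := M.trans
  V := fun a w => match a with
    | .inl i => M.Vp i w
    | .inr i => M.Vn i w
  mono := by
    intro a w v hle h
    cases a with
    | inl i => exact M.monoP i hle h
    | inr i => exact M.monoN i hle h

/-
Induction on `φ`, proving the verification and the falsification clause together:
`E φ false` translates `~φ`, so negation merely swaps the polarity, and every other clause of
the Nelsonian semantics is the intuitionistic clause of the corresponding `E`-image, read in a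
model with the same worlds and order.
-/
theorem NModel.sat_iff_toIModel_sat_E (M : NModel) (φ : N4Form) (b : Bool) (w : M.W) :
    M.sat φ b w ↔ M.toIModel.sat (E φ b) w := by
  induction φ generalizing b w with
  | var n => cases b <;> rfl
  | neg φ ih => exact ih (!b) w
  | and φ ψ ihφ ihψ | or φ ψ ihφ ihψ | imp φ ψ ihφ ihψ =>
    cases b <;> simp only [NModel.sat, E, IModel.sat, ihφ, ihψ] <;> rfl

theorem toIModel_sat (M : NModel) (w : M.W) (φ : N4Form) :
    M.sat φ true w ↔ M.toIModel.sat (E φ true) w :=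
  M.sat_iff_toIModel_sat_E φ true w
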